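/- arXiv:1501.02861 — 2 statements merged into one kernel-verified Lean document; each statement's English description precedes it below -/
import Mathlib

section
/- Let T : ℝᵈ → ℝᵈ be an affine map that sends some regular simplex of edge length 1 to an η-approximate regular simplex with maximum edge length λ > 0. Then there is a constant C depending only on d and an isometry R : ℝᵈ → ℝᵈ such that ‖T(x) - λR(x)‖ ≤ C·λ·η for all x in the unit ball B(0,1). -/
/-!
Rescale `T` by `λ⁻¹` and let `L` be its linear part. The edge vectors `w (i+1) - w 0` of the unit
simplex form a basis whose Gram matrix is `(1 + δᵢⱼ) / 2`, and a Gram matrix of edge vectors is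
determined by the squared edge lengths; so `L` moves every Gram entry by `O(η)`, which gives
`|‖L x‖² - ‖x‖²| ≤ O(d η) ‖x‖²`. An eigenbasis `b` of `L† L` is orthonormal with `L bᵢ`
pairwise orthogonal, and `bᵢ ↦ L bᵢ / ‖L bᵢ‖` defines a linear isometry `U` with
`‖L - U‖ ≤ O(d η)`. Translating `U` so that it matches `λ⁻¹ T` at `0` gives `R`.
-/

open Finset RealInnerProductSpace Module

variable {E F : Type*} [NormedAddCommGroup E] [InnerProductSpace ℝ E]
  [NormedAddCommGroup F] [InnerProductSpace ℝ F]

theorem real_inner_sub_sub_eq_dist_sq (a b c : E) :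
    ⟪a - c, b - c⟫ = (dist a c ^ 2 + dist b c ^ 2 - dist a b ^ 2) / 2 := by
  rw [real_inner_eq_norm_mul_self_add_norm_mul_self_sub_norm_sub_mul_self_div_two,
    sub_sub_sub_cancel_right, dist_eq_norm, dist_eq_norm, dist_eq_norm]
  ring

theorem abs_inner_sub_sub_sub_le {ι : Type*} (p : ι → E) (q : ι → F) {δ : ℝ}
    (h : ∀ i j, |dist (p i) (p j) ^ 2 - dist (q i) (q j) ^ 2| ≤ δ) (i j k : ι) :
    |⟪p i - p k, p j - p k⟫ - ⟪q i - q k, q j - q k⟫| ≤ 3 / 2 * δ := by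
  rw [real_inner_sub_sub_eq_dist_sq, real_inner_sub_sub_eq_dist_sq]
  have hik := abs_le.mp (h i k)
  have hjk := abs_le.mp (h j k)
  have hij := abs_le.mp (h i j)
  rw [abs_le]
  constructor <;> linarith [hik.1, hik.2, hjk.1, hjk.2, hij.1, hij.2]

theorem real_inner_sub_sub_of_dist_eq_one {ι : Type*} [DecidableEq ι] {p : ι → E}
    (hp : ∀ i j, i ≠ j → dist (p i) (p j) = 1) {i j k : ι} (hi : i ≠ k) (hj : j ≠ k) :
    ⟪p i - p k, p j - p k⟫ = if i = j then 1 else 1 / 2 := by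
  rw [real_inner_sub_sub_eq_dist_sq, hp i k hi, hp j k hj]
  split_ifs with hij
  · subst hij; norm_num
  · rw [hp i j hij]; norm_num

theorem real_inner_sum_smul_sum_smul {ι κ : Type*} [Fintype ι] [Fintype κ] (c : ι → ℝ) (v : ι → E)
    (c' : κ → ℝ) (v' : κ → E) :
    ⟪∑ i, c i • v i, ∑ j, c' j • v' j⟫ = ∑ i, ∑ j, c i * c' j * ⟪v i, v' j⟫ := by
  rw [sum_inner]
  refine sum_congr rfl fun i _ => ?_
  rw [real_inner_smul_left, inner_sum, mul_sum]
  refine sum_congr rfl fun j _ => ?_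
  rw [real_inner_smul_right, mul_assoc]

section EqualGram

variable {ι : Type*} [Fintype ι] [DecidableEq ι] {e : ι → E}

theorem norm_sum_smul_sq_of_inner_eq (he : ∀ i j, ⟪e i, e j⟫ = if i = j then 1 else 1 / 2)
    (c : ι → ℝ) : ‖∑ i, c i • e i‖ ^ 2 = (∑ i, c i ^ 2) / 2 + (∑ i, c i) ^ 2 / 2 := by
  have he' : ∀ i j, ⟪e i, e j⟫ = 1 / 2 + if i = j then 1 / 2 else 0 := fun i j => by
    rw [he]; split_ifs <;> norm_num
  rw [← real_inner_self_eq_norm_sq, real_inner_sum_smul_sum_smul]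
  simp only [he', mul_add, sum_add_distrib, mul_ite, mul_zero, sum_ite_eq, mem_univ, if_true,
    sq, sum_mul_sum, ← sum_div, ← mul_div_assoc, mul_one]
  ring

theorem sum_sq_le_two_mul_norm_sum_smul_sq
    (he : ∀ i j, ⟪e i, e j⟫ = if i = j then 1 else 1 / 2) (c : ι → ℝ) :
    ∑ i, c i ^ 2 ≤ 2 * ‖∑ i, c i • e i‖ ^ 2 := by
  rw [norm_sum_smul_sq_of_inner_eq he]
  nlinarith [sq_nonneg (∑ i, c i)]

theorem linearIndependent_of_inner_eq (he : ∀ i j, ⟪e i, e j⟫ = if i = j then 1 else 1 / 2) :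
    LinearIndependent ℝ e := by
  rw [Fintype.linearIndependent_iff]
  intro c hc i
  have hsum : ∑ j, c j ^ 2 = 0 := by
    refine le_antisymm ?_ (sum_nonneg fun j _ => sq_nonneg (c j))
    simpa [hc] using sum_sq_le_two_mul_norm_sum_smul_sq he c
  exact pow_eq_zero_iff two_ne_zero |>.mp <|
    (sum_eq_zero_iff_of_nonneg fun j _ => sq_nonneg (c j)).mp hsum i (mem_univ i)

end EqualGram

theorem abs_norm_sq_map_sum_smul_sub_le {ι : Type*} [Fintype ι] (L : E →ₗ[ℝ] F) (e : ι → E)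
    {δ : ℝ} (h : ∀ i j, |⟪L (e i), L (e j)⟫ - ⟪e i, e j⟫| ≤ δ) (c : ι → ℝ) :
    |‖L (∑ i, c i • e i)‖ ^ 2 - ‖∑ i, c i • e i‖ ^ 2| ≤ δ * (∑ i, |c i|) ^ 2 := by
  have hdiff : ‖L (∑ i, c i • e i)‖ ^ 2 - ‖∑ i, c i • e i‖ ^ 2
      = ∑ i, ∑ j, c i * c j * (⟪L (e i), L (e j)⟫ - ⟪e i, e j⟫) := by
    simp only [map_sum, map_smul, ← real_inner_self_eq_norm_sq, real_inner_sum_smul_sum_smul,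
      ← sum_sub_distrib, mul_sub]
  rw [hdiff, sq, sum_mul_sum, mul_sum]
  refine (abs_sum_le_sum_abs _ _).trans <| sum_le_sum fun i _ => ?_
  rw [mul_sum]
  refine (abs_sum_le_sum_abs _ _).trans <| sum_le_sum fun j _ => ?_
  rw [abs_mul, abs_mul, mul_comm δ]
  exact mul_le_mul_of_nonneg_left (h i j) (by positivity)

theorem AffineMap.abs_norm_sq_linear_sub_le_of_dist_eq_one [FiniteDimensional ℝ E] {n : ℕ}
    (hn : finrank ℝ E = n) (S : E →ᵃ[ℝ] F) {w : Fin (n + 1) → E}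
    (hw : ∀ i j, i ≠ j → dist (w i) (w j) = 1) {δ : ℝ}
    (hS : ∀ i j, |dist (S (w i)) (S (w j)) ^ 2 - dist (w i) (w j) ^ 2| ≤ δ) (x : E) :
    |‖S.linear x‖ ^ 2 - ‖x‖ ^ 2| ≤ 3 * n * δ * ‖x‖ ^ 2 := by
  set e : Fin n → E := fun i => w i.succ - w 0
  have he : ∀ i j, ⟪e i, e j⟫ = if i = j then 1 else 1 / 2 := fun i j => by
    simpa [Fin.succ_inj] using
      real_inner_sub_sub_of_dist_eq_one hw (Fin.succ_ne_zero i) (Fin.succ_ne_zero j)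
  have hSe : ∀ i j, |⟪S.linear (e i), S.linear (e j)⟫ - ⟪e i, e j⟫| ≤ 3 / 2 * δ := fun i j => by
    simpa only [e, ← vsub_eq_sub, S.linearMap_vsub] using
      abs_inner_sub_sub_sub_le (fun k => S (w k)) w hS i.succ j.succ 0
  have hδ : 0 ≤ δ := (abs_nonneg _).trans (hS 0 0)
  have hspan : Submodule.span ℝ (Set.range e) = ⊤ :=
    (linearIndependent_of_inner_eq he).span_eq_top_of_card_eq_finrank' (by simp [hn])
  obtain ⟨c, rfl⟩ : ∃ c : Fin n → ℝ, ∑ i, c i • e i = x :=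
    (Submodule.mem_span_range_iff_exists_fun ℝ).mp (hspan ▸ Submodule.mem_top)
  calc |‖S.linear (∑ i, c i • e i)‖ ^ 2 - ‖∑ i, c i • e i‖ ^ 2|
      ≤ 3 / 2 * δ * (∑ i, |c i|) ^ 2 := abs_norm_sq_map_sum_smul_sub_le _ e hSe c
    _ ≤ 3 / 2 * δ * (n * ∑ i, c i ^ 2) := by
      gcongr
      simpa using sq_sum_le_card_mul_sum_sq (s := univ) (f := fun i => |c i|)
    _ ≤ 3 / 2 * δ * (n * (2 * ‖∑ i, c i • e i‖ ^ 2)) := by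
      gcongr; exact sum_sq_le_two_mul_norm_sum_smul_sq he c
    _ = 3 * n * δ * ‖∑ i, c i • e i‖ ^ 2 := by ring

theorem Orthonormal.norm_sum_smul_sq {ι : Type*} [Fintype ι] {v : ι → E} (hv : Orthonormal ℝ v)
    (c : ι → ℝ) : ‖∑ i, c i • v i‖ ^ 2 = ∑ i, c i ^ 2 := by
  rw [← real_inner_self_eq_norm_sq, hv.inner_sum]
  simp [sq]

section FiniteDimensional

variable [FiniteDimensional ℝ E]

theorem LinearMap.exists_orthonormalBasis_pairwise_inner_map_eq_zero [FiniteDimensional ℝ F]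
    (L : E →ₗ[ℝ] F) :
    ∃ b : OrthonormalBasis (Fin (finrank ℝ E)) ℝ E,
      Pairwise fun i j => ⟪L (b i), L (b j)⟫ = 0 := by
  have hA := L.isPositive_adjoint_comp_self.isSymmetric
  refine ⟨hA.eigenvectorBasis rfl, fun i j hij => ?_⟩
  dsimp only
  rw [← LinearMap.adjoint_inner_left, ← LinearMap.comp_apply, hA.apply_eigenvectorBasis,
    real_inner_smul_left, (hA.eigenvectorBasis rfl).orthonormal.inner_eq_zero hij, mul_zero]

theorem exists_linearIsometry_norm_sub_le_of_lt_one [FiniteDimensional ℝ F] (L : E →ₗ[ℝ] F)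
    {ε : ℝ} (hε₀ : 0 ≤ ε) (hε₁ : ε < 1) (h : ∀ x, |‖L x‖ ^ 2 - ‖x‖ ^ 2| ≤ ε * ‖x‖ ^ 2) :
    ∃ U : E →ₗᵢ[ℝ] F, ∀ x, ‖L x - U x‖ ≤ ε * ‖x‖ := by
  obtain ⟨b, hb⟩ := L.exists_orthonormalBasis_pairwise_inner_map_eq_zero
  set s := fun i => ‖L (b i)‖
  have hs : ∀ i, |s i - 1| ≤ ε := fun i => by
    have := h (b i)
    rw [b.orthonormal.norm_eq_one, one_pow, mul_one] at this
    have : |s i - 1| * (s i + 1) = |s i ^ 2 - 1| := by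
      rw [← abs_of_nonneg (by positivity : 0 ≤ s i + 1), ← abs_mul]; ring_nf
    nlinarith [abs_nonneg (s i - 1), norm_nonneg (L (b i))]
  have hs₀ : ∀ i, s i ≠ 0 := fun i hi => by
    have := hs i
    rw [hi, zero_sub, abs_neg, abs_one] at this
    linarith
  set f := fun i => (s i)⁻¹ • L (b i)
  have hLf : ∀ i, L (b i) = s i • f i := fun i => by simp [f, smul_smul, hs₀ i]
  have hf : Orthonormal ℝ f := by
    refine ⟨fun i => ?_, fun i j hij => ?_⟩
    · simp [f, norm_smul, s, inv_mul_cancel₀ (hs₀ i)]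
    · simp [f, real_inner_smul_left, real_inner_smul_right, hb hij]
  let V := b.toBasis.constr ℝ f
  have hV : ∀ i, V (b i) = f i := fun i => by simp [V]
  let U := V.isometryOfOrthonormal (v := b.toBasis) (by simp [b.orthonormal])
    (by simp [Function.comp_def, hV, hf])
  refine ⟨U, fun x => ?_⟩
  set y := b.repr x
  have hx : x = ∑ i, y i • b i := (b.sum_repr x).symm
  have hLU : L x - U x = ∑ i, (y i * (s i - 1)) • f i := by
    have hUV : ∀ x, U x = V x := fun _ => rfl
    simp only [hUV, hx, map_sum, map_smul, hLf, hV, ← sum_sub_distrib, smul_smul, ← sub_smul,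
      mul_sub, mul_one]
  have hsq : ‖L x - U x‖ ^ 2 ≤ (ε * ‖x‖) ^ 2 := by
    rw [hLU, hf.norm_sum_smul_sq, mul_pow, hx, b.orthonormal.norm_sum_smul_sq, mul_sum]
    refine sum_le_sum fun i _ => ?_
    rw [mul_pow, mul_comm]
    exact mul_le_mul_of_nonneg_right (sq_le_sq' (abs_le.mp (hs i)).1 (abs_le.mp (hs i)).2)
      (sq_nonneg _)
  exact pow_le_pow_iff_left₀ (norm_nonneg _) (by positivity) two_ne_zero |>.mp hsq

theorem exists_linearIsometry_norm_sub_le (L : E →ₗ[ℝ] E) {ε : ℝ} (hε : 0 ≤ ε)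
    (h : ∀ x, |‖L x‖ ^ 2 - ‖x‖ ^ 2| ≤ ε * ‖x‖ ^ 2) :
    ∃ U : E →ₗᵢ[ℝ] E, ∀ x, ‖L x - U x‖ ≤ 3 * ε * ‖x‖ := by
  rcases lt_or_ge ε 1 with hε₁ | hε₁
  · obtain ⟨U, hU⟩ := exists_linearIsometry_norm_sub_le_of_lt_one L hε hε₁ h
    exact ⟨U, fun x => (hU x).trans (by nlinarith [norm_nonneg x])⟩
  · refine ⟨LinearIsometry.id, fun x => ?_⟩
    have hLx : ‖L x‖ ≤ (1 + ε / 2) * ‖x‖ := by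
      have := (abs_le.mp (h x)).2
      refine pow_le_pow_iff_left₀ (norm_nonneg _) (by positivity) two_ne_zero |>.mp ?_
      nlinarith [sq_nonneg ‖x‖]
    calc ‖L x - x‖ ≤ ‖L x‖ + ‖x‖ := norm_sub_le _ _
      _ ≤ 3 * ε * ‖x‖ := by nlinarith [norm_nonneg x]

end FiniteDimensional

theorem AffineMap.exists_affineIsometry_sub_smul_eq (T : E →ᵃ[ℝ] F) (U : E →ₗᵢ[ℝ] F) {c : ℝ}
    (hc : c ≠ 0) : ∃ R : E →ᵃⁱ[ℝ] F, ∀ x, T x - c • R x = T.linear x - c • U x := by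
  refine ⟨(AffineIsometryEquiv.constVAdd ℝ F (c⁻¹ • T 0)).toAffineIsometry.comp
    U.toAffineIsometry, fun x => ?_⟩
  have hR : ((AffineIsometryEquiv.constVAdd ℝ F (c⁻¹ • T 0)).toAffineIsometry.comp
      U.toAffineIsometry) x = c⁻¹ • T 0 + U x := rfl
  have hT : T x = T.linear x + T 0 := by simpa using T.map_vadd 0 x
  rw [hR, hT, smul_add, smul_smul, mul_inv_cancel₀ hc, one_smul]
  abel

/-- An affine map sending a unit regular simplex to an `η`-approximate regular
simplex with maximum edge length `λ` is within `C λ η` of `λ` times an isometry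
on the unit ball. -/
theorem stmt17 (d : ℕ) :
    ∃ C : ℝ, 0 < C ∧
      ∀ (T : EuclideanSpace ℝ (Fin d) →ᵃ[ℝ] EuclideanSpace ℝ (Fin d))
        (w : Fin (d + 1) → EuclideanSpace ℝ (Fin d)) (η lam : ℝ),
        0 ≤ η → η < 1 → 0 < lam →
        (∀ i j, i ≠ j → dist (w i) (w j) = 1) →
        (∀ i j, dist (T (w i)) (T (w j)) ≤ lam) →
        (∃ i j, i ≠ j ∧ dist (T (w i)) (T (w j)) = lam) →
        (∀ i j, i ≠ j → (1 - η) * lam ≤ dist (T (w i)) (T (w j))) →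
        ∃ R : EuclideanSpace ℝ (Fin d) →ᵃⁱ[ℝ] EuclideanSpace ℝ (Fin d),
          ∀ x ∈ Metric.ball (0 : EuclideanSpace ℝ (Fin d)) 1,
            ‖T x - lam • R x‖ ≤ C * lam * η := by
  refine ⟨18 * (d + 1), by positivity, fun T w η lam hη _ hlam hw hub _ hlb => ?_⟩
  set S := lam⁻¹ • T
  have hdist : ∀ i j, dist (S (w i)) (S (w j)) = lam⁻¹ * dist (T (w i)) (T (w j)) :=
    fun i j => by simp [S, dist_smul₀, hlam.le]
  have hS : ∀ i j, |dist (S (w i)) (S (w j)) ^ 2 - dist (w i) (w j) ^ 2| ≤ 2 * η := by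
    intro i j
    rcases eq_or_ne i j with rfl | hij
    · simpa using hη
    have h₁ : 1 - η ≤ dist (S (w i)) (S (w j)) := by
      rw [hdist, le_inv_mul_iff₀ hlam]; linarith [hlb i j hij]
    have h₂ : dist (S (w i)) (S (w j)) ≤ 1 := by
      rw [hdist, inv_mul_le_iff₀ hlam, mul_one]; exact hub i j
    rw [hw i j hij, abs_le]
    constructor <;> nlinarith [dist_nonneg (x := S (w i)) (y := S (w j))]
  obtain ⟨U, hU⟩ := exists_linearIsometry_norm_sub_le S.linear (by positivity)
    (S.abs_norm_sq_linear_sub_le_of_dist_eq_one finrank_euclideanSpace_fin hw hS)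
  obtain ⟨R, hR⟩ := T.exists_affineIsometry_sub_smul_eq U hlam.ne'
  refine ⟨R, fun x hx => ?_⟩
  have hx : ‖x‖ ≤ 1 := (mem_ball_zero_iff.mp hx).le
  have hTS : T.linear x - lam • U x = lam • (S.linear x - U x) := by
    simp [S, smul_sub, smul_smul, mul_inv_cancel₀ hlam.ne']
  calc ‖T x - lam • R x‖ = lam * ‖S.linear x - U x‖ := by
        rw [hR, hTS, norm_smul, Real.norm_of_nonneg hlam.le]
    _ ≤ lam * (3 * (3 * d * (2 * η)) * ‖x‖) := by gcongr; exact hU x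
    _ ≤ 18 * (d + 1) * lam * η := by
      have : 0 ≤ lam * η := by positivity
      nlinarith [mul_le_mul_of_nonneg_left hx (by positivity : (0 : ℝ) ≤ d * (lam * η))]
end

section
/- Let V = B(v, r) ⊆ ℝᵈ be an open ball, Λ ⊆ V with ε = δ_H(Λ, B(v,r)), and ψ : Λ → Q isotonic with Q bounded. Then there is C proportional to diam(Q)/r such that for all x, x' ∈ Λ ∩ B(v, 3r/4), all x†, x‡ ∈ Λ, and all η ∈ (0, r/4 - 2ε): if |‖x - x'‖ - ‖x† - x‡‖| ≤ η, then |‖ψ(x) - ψ(x')‖ - ‖ψ(x†) - ψ(x‡)‖| ≤ C(η + ε). -/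
/-!
Isotonicity turns a grid of `(n + 1) ^ d` points of spacing `t` in the ball, each moved by at
most `ε` into `Λ`, into `(n + 1) ^ d` points of `Q` that are pairwise at least `‖ψ p - ψ q‖` apart
as soon as `‖p - q‖ + 2ε < t`; comparing volumes of disjoint balls gives
`‖ψ p - ψ q‖ ≤ 6 (d + 1) diam Q (‖p - q‖ + 2ε) / r`. For the main estimate, walk a distance
`δ ≈ η + ε` from `x'` towards (or away from) `x` and move to a nearby `z ∈ Λ`: then `‖x - z‖` is
strictly below (or above) `‖x† - x‡‖`, so isotonicity compares `‖ψ x - ψ z‖` with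
`‖ψ x† - ψ x‡‖`, while `‖ψ z - ψ x'‖` is small by the first estimate.
-/

open Metric MeasureTheory Module Set Filter

def IsIsotonicOn {α β : Type*} [PseudoMetricSpace α] [PseudoMetricSpace β] (ψ : α → β)
    (Λ : Set α) : Prop :=
  ∀ a ∈ Λ, ∀ b ∈ Λ, ∀ a' ∈ Λ, ∀ b' ∈ Λ, dist a b < dist a' b' →
    dist (ψ a) (ψ b) ≤ dist (ψ a') (ψ b')

theorem card_mul_pow_le_of_pairwise_le_dist {E : Type*} [NormedAddCommGroup E] [NormedSpace ℝ E]
    [FiniteDimensional ℝ E] {ι : Type*} [Fintype ι] {f : ι → E} {c : E} {R θ : ℝ}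
    (hR : 0 ≤ R) (hθ : 0 < θ) (hsep : Pairwise fun i j => θ ≤ dist (f i) (f j))
    (hf : ∀ i, f i ∈ closedBall c R) :
    Fintype.card ι * (θ / 2) ^ finrank ℝ E ≤ (R + θ / 2) ^ finrank ℝ E := by
  borelize E
  let μ : Measure E := Measure.addHaar
  have hdisj : Pairwise (Function.onFun Disjoint fun i => ball (f i) (θ / 2)) :=
    fun i j hij => ball_disjoint_ball (by linarith [hsep hij])
  have hsub : (⋃ i, ball (f i) (θ / 2)) ⊆ ball c (R + θ / 2) :=
    iUnion_subset fun i => ball_subset_ball' (by linarith [mem_closedBall.mp (hf i)])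
  have hvol : (Fintype.card ι : ENNReal) * (ENNReal.ofReal ((θ / 2) ^ finrank ℝ E) * μ (ball 0 1))
      ≤ ENNReal.ofReal ((R + θ / 2) ^ finrank ℝ E) * μ (ball 0 1) := by
    calc (Fintype.card ι : ENNReal) * (ENNReal.ofReal ((θ / 2) ^ finrank ℝ E) * μ (ball 0 1))
        = ∑ i, μ (ball (f i) (θ / 2)) := by
          simp [Measure.addHaar_ball_of_pos μ _ (half_pos hθ)]
      _ = μ (⋃ i, ball (f i) (θ / 2)) := by
          rw [measure_iUnion hdisj fun _ => measurableSet_ball, tsum_fintype]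
      _ ≤ μ (ball c (R + θ / 2)) := measure_mono hsub
      _ = _ := Measure.addHaar_ball_of_pos μ _ (by positivity)
  rw [← mul_assoc, ENNReal.mul_le_mul_iff_left (measure_ball_pos μ 0 one_pos).ne'
    measure_ball_lt_top.ne, ← ENNReal.ofReal_natCast, ← ENNReal.ofReal_mul (by positivity),
    ENNReal.ofReal_le_ofReal_iff (by positivity)] at hvol
  exact hvol

theorem exists_grid_in_closedBall {d : ℕ} (n : ℕ) (v : EuclideanSpace ℝ (Fin d)) {t : ℝ}
    (ht : 0 ≤ t) :
    ∃ y : (Fin d → Fin (n + 1)) → EuclideanSpace ℝ (Fin d),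
      (Pairwise fun k k' => t ≤ dist (y k) (y k')) ∧ ∀ k, dist (y k) v ≤ t * n * √d := by
  let e : (Fin d → Fin (n + 1)) → EuclideanSpace ℝ (Fin d) :=
    fun k => WithLp.toLp 2 fun i => (k i : ℝ)
  refine ⟨fun k => v + t • e k, fun k k' hkk' => ?_, fun k => ?_⟩
  · obtain ⟨i, hi⟩ := Function.ne_iff.mp hkk'
    have hki : (1 : ℝ) ≤ |(k i : ℝ) - k' i| := by
      have : ((k i : ℕ) : ℤ) - (k' i : ℕ) ≠ 0 :=
        sub_ne_zero.mpr (by exact_mod_cast Fin.val_ne_of_ne hi)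
      exact_mod_cast Int.one_le_abs this
    calc t = t * 1 := (mul_one t).symm
      _ ≤ t * ‖(e k - e k') i‖ := by gcongr; simpa [e] using hki
      _ ≤ t * ‖e k - e k'‖ := by gcongr; exact PiLp.norm_apply_le _ i
      _ = dist (v + t • e k) (v + t • e k') := by
        rw [dist_add_left, dist_eq_norm, ← smul_sub, norm_smul, Real.norm_of_nonneg ht]
  · have hcoord : ∀ i, ‖(e k) i‖ ^ 2 ≤ (n : ℝ) ^ 2 := fun i => by
      have : (k i : ℝ) ≤ n := by exact_mod_cast Nat.lt_succ_iff.mp (k i).is_lt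
      simp only [e, Real.norm_natCast]
      gcongr
    have hnorm : ‖e k‖ ≤ n * √d := by
      rw [EuclideanSpace.norm_eq, ← Real.sqrt_sq (Nat.cast_nonneg n),
        ← Real.sqrt_mul (by positivity)]
      refine Real.sqrt_le_sqrt ((Finset.sum_le_sum fun i _ => hcoord i).trans_eq ?_)
      simp [mul_comm]
    rw [dist_comm, dist_self_add_right, norm_smul, Real.norm_of_nonneg ht, mul_assoc]
    gcongr

section Euclidean

variable {d : ℕ} {v : EuclideanSpace ℝ (Fin d)} {r ε : ℝ} {Λ Q : Set (EuclideanSpace ℝ (Fin d))}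
  {ψ : EuclideanSpace ℝ (Fin d) → EuclideanSpace ℝ (Fin d)} {p q : EuclideanSpace ℝ (Fin d)}

theorem IsIsotonicOn.nat_mul_dist_le_two_mul_diam (hψ : IsIsotonicOn ψ Λ)
    (hnet : ∀ y ∈ ball v r, ∃ x ∈ Λ, dist y x ≤ ε) (hQ : Bornology.IsBounded Q)
    (hψQ : MapsTo ψ Λ Q) (hε : 0 ≤ ε) (hp : p ∈ Λ) (hq : q ∈ Λ) {t : ℝ} (hpq : dist p q + 2 * ε < t)
    {n : ℕ} (hn : t * n * √d < r) :
    n * dist (ψ p) (ψ q) ≤ 2 * diam Q := by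
  have hD := diam_nonneg (s := Q)
  rcases Nat.eq_zero_or_pos d with rfl | hd
  · simp [Subsingleton.elim (ψ p) (ψ q), hD]
  rcases (dist_nonneg (x := ψ p) (y := ψ q)).eq_or_lt with hθ | hθ
  · simp [← hθ, hD]
  have ht : 0 ≤ t := by linarith [dist_nonneg (x := p) (y := q)]
  obtain ⟨y, hsep, hy⟩ := exists_grid_in_closedBall n v ht
  choose w hwΛ hw using fun k => hnet (y k) (mem_ball.mpr ((hy k).trans_lt hn))
  have hwsep : Pairwise fun k k' => dist (ψ p) (ψ q) ≤ dist (ψ (w k)) (ψ (w k')) := by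
    intro k k' hkk'
    refine hψ p hp q hq _ (hwΛ k) _ (hwΛ k') ?_
    linarith [hsep hkk', dist_triangle4 (y k) (w k) (w k') (y k'), hw k, dist_comm (y k') (w k'),
      hw k']
  have hpack := card_mul_pow_le_of_pairwise_le_dist hD hθ hwsep
    fun k => mem_closedBall.mpr (dist_le_diam_of_mem hQ (hψQ (hwΛ k)) (hψQ hp))
  rw [Fintype.card_fun, Fintype.card_fin, Fintype.card_fin, finrank_euclideanSpace_fin,
    Nat.cast_pow, ← mul_pow] at hpack
  have := le_of_pow_le_pow_left₀ hd.ne' (by positivity) hpack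
  push_cast at this
  linarith

theorem IsIsotonicOn.dist_apply_le_of_add_lt (hψ : IsIsotonicOn ψ Λ)
    (hnet : ∀ y ∈ ball v r, ∃ x ∈ Λ, dist y x ≤ ε) (hQ : Bornology.IsBounded Q)
    (hψQ : MapsTo ψ Λ Q) (hr : 0 < r) (hε : 0 ≤ ε) (hp : p ∈ Λ) (hq : q ∈ Λ) {t : ℝ}
    (hpq : dist p q + 2 * ε < t) :
    dist (ψ p) (ψ q) ≤ 6 * (d + 1) * diam Q / r * t := by
  have ht : 0 < t := by linarith [dist_nonneg (x := p) (y := q)]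
  have hd : (0 : ℝ) < 2 * t * (d + 1) := by positivity
  set n := ⌊r / (2 * t * (d + 1))⌋₊
  have hn_le : n * (2 * t * (d + 1)) ≤ r := (le_div_iff₀ hd).mp (Nat.floor_le (by positivity))
  have hn_lt : r < (n + 1) * (2 * t * (d + 1)) := (div_lt_iff₀ hd).mp (Nat.lt_floor_add_one _)
  have hsqrt : √d ≤ d + 1 := Real.sqrt_le_iff.mpr ⟨by positivity, by nlinarith⟩
  have hgrid : t * n * √d < r := by
    nlinarith [mul_le_mul_of_nonneg_left hsqrt (by positivity : 0 ≤ t * n)]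
  have hnθ := hψ.nat_mul_dist_le_two_mul_diam hnet hQ hψQ hε hp hq hpq hgrid
  have hθ : dist (ψ p) (ψ q) ≤ diam Q := dist_le_diam_of_mem hQ (hψQ hp) (hψQ hq)
  rw [div_mul_eq_mul_div, le_div_iff₀ hr]
  nlinarith [mul_le_mul_of_nonneg_left hn_lt.le (dist_nonneg (x := ψ p) (y := ψ q))]

theorem IsIsotonicOn.dist_apply_le (hψ : IsIsotonicOn ψ Λ)
    (hnet : ∀ y ∈ ball v r, ∃ x ∈ Λ, dist y x ≤ ε) (hQ : Bornology.IsBounded Q)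
    (hψQ : MapsTo ψ Λ Q) (hr : 0 < r) (hε : 0 ≤ ε) (hp : p ∈ Λ) (hq : q ∈ Λ) :
    dist (ψ p) (ψ q) ≤ 6 * (d + 1) * diam Q / r * (dist p q + 2 * ε) :=
  ge_of_tendsto ((continuous_const_mul _).continuousWithinAt (s := Ioi _))
    (eventually_nhdsWithin_of_forall fun _ ht =>
      hψ.dist_apply_le_of_add_lt hnet hQ hψQ hr hε hp hq ht)

end Euclidean

section NormedSpace

variable {E F : Type*} [NormedAddCommGroup E] [NormedSpace ℝ E] [PseudoMetricSpace F]

theorem exists_dist_eq_of_le_dist {x x' : E} {δ : ℝ} (hδ : 0 ≤ δ) (h : δ ≤ dist x x') :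
    ∃ y, dist y x' = δ ∧ dist x y = dist x x' - δ := by
  rcases (hδ.trans h).eq_or_lt with h0 | hpos
  · obtain rfl : δ = 0 := by linarith
    exact ⟨x', dist_self x', (sub_zero _).symm⟩
  refine ⟨AffineMap.lineMap x' x (δ / dist x x'), ?_, ?_⟩
  · rw [dist_lineMap_left, dist_comm x', Real.norm_of_nonneg (by positivity),
      div_mul_cancel₀ _ hpos.ne']
  · rw [dist_comm, dist_lineMap_right, dist_comm x',
      Real.norm_of_nonneg (sub_nonneg.mpr ((div_le_one hpos).mpr h)), sub_mul,
      div_mul_cancel₀ _ hpos.ne', one_mul]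

theorem exists_dist_eq_dist_add {x x' : E} {δ : ℝ} (hδ : 0 ≤ δ) (hxx' : x ≠ x') :
    ∃ y, dist y x' = δ ∧ dist x y = dist x x' + δ := by
  have hpos : 0 < dist x x' := dist_pos.mpr hxx'
  refine ⟨AffineMap.lineMap x' x (-(δ / dist x x')), ?_, ?_⟩
  · rw [dist_lineMap_left, dist_comm x', norm_neg, Real.norm_of_nonneg (by positivity),
      div_mul_cancel₀ _ hpos.ne']
  · rw [dist_comm, dist_lineMap_right, dist_comm x', sub_neg_eq_add,
      Real.norm_of_nonneg (by positivity), add_mul, div_mul_cancel₀ _ hpos.ne', one_mul]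

variable {ψ : E → F} {Λ : Set E} {v x x' xd xdd : E} {r ε L δ η : ℝ}

theorem IsIsotonicOn.dist_apply_le_dist_apply_add_of_le_add (hψ : IsIsotonicOn ψ Λ)
    (hnet : ∀ y ∈ ball v r, ∃ x ∈ Λ, dist y x ≤ ε)
    (hL : ∀ p ∈ Λ, ∀ q ∈ Λ, dist (ψ p) (ψ q) ≤ L * (dist p q + 2 * ε)) (hL0 : 0 ≤ L)
    (hε : 0 ≤ ε) (hx : x ∈ Λ) (hx' : x' ∈ Λ) (hx'v : x' ∈ ball v (r - δ)) (hxd : xd ∈ Λ)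
    (hxdd : xdd ∈ Λ) (hη : 0 ≤ η) (hδ : η + ε < δ)
    (hclose : dist x x' ≤ dist xd xdd + η) :
    dist (ψ x) (ψ x') ≤ dist (ψ xd) (ψ xdd) + L * (δ + 3 * ε) := by
  rcases lt_or_ge (dist x x') δ with hlt | hle
  · nlinarith [hL x hx x' hx', dist_nonneg (x := ψ xd) (y := ψ xdd)]
  obtain ⟨y, hyx', hxy⟩ := exists_dist_eq_of_le_dist (by linarith) hle
  obtain ⟨z, hz, hyz⟩ :=
    hnet y (mem_ball.mpr (by linarith [dist_triangle y x' v, mem_ball.mp hx'v]))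
  have hxz : dist (ψ x) (ψ z) ≤ dist (ψ xd) (ψ xdd) :=
    hψ x hx z hz xd hxd xdd hxdd (by linarith [dist_triangle x y z])
  have hzx' : dist z x' ≤ δ + ε := by linarith [dist_triangle z y x', dist_comm z y]
  nlinarith [hL z hz x' hx', dist_triangle (ψ x) (ψ z) (ψ x')]

theorem IsIsotonicOn.dist_apply_le_dist_apply_add_of_le_add' (hψ : IsIsotonicOn ψ Λ)
    (hnet : ∀ y ∈ ball v r, ∃ x ∈ Λ, dist y x ≤ ε)
    (hL : ∀ p ∈ Λ, ∀ q ∈ Λ, dist (ψ p) (ψ q) ≤ L * (dist p q + 2 * ε)) (hL0 : 0 ≤ L)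
    (hε : 0 ≤ ε) (hx : x ∈ Λ) (hx' : x' ∈ Λ) (hx'v : x' ∈ ball v (r - δ)) (hxd : xd ∈ Λ)
    (hxdd : xdd ∈ Λ) (hη : 0 ≤ η) (hδ : η + ε < δ)
    (hclose : dist xd xdd ≤ dist x x' + η) :
    dist (ψ xd) (ψ xdd) ≤ dist (ψ x) (ψ x') + L * (δ + 3 * ε) := by
  rcases eq_or_ne x x' with rfl | hxx'
  · rw [dist_self] at hclose
    nlinarith [hL xd hxd xdd hxdd, dist_nonneg (x := ψ x) (y := ψ x)]
  obtain ⟨y, hyx', hxy⟩ := exists_dist_eq_dist_add (δ := δ) (by linarith) hxx'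
  obtain ⟨z, hz, hyz⟩ :=
    hnet y (mem_ball.mpr (by linarith [dist_triangle y x' v, mem_ball.mp hx'v]))
  have hxz : dist (ψ xd) (ψ xdd) ≤ dist (ψ x) (ψ z) :=
    hψ xd hxd xdd hxdd x hx z hz (by linarith [dist_triangle x z y, dist_comm z y])
  have hx'z : dist x' z ≤ δ + ε := by linarith [dist_triangle x' y z, dist_comm x' y]
  nlinarith [hL x' hx' z hz, dist_triangle (ψ x) (ψ x') (ψ z)]

theorem IsIsotonicOn.abs_dist_sub_dist_le (hψ : IsIsotonicOn ψ Λ)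
    (hnet : ∀ y ∈ ball v r, ∃ x ∈ Λ, dist y x ≤ ε)
    (hL : ∀ p ∈ Λ, ∀ q ∈ Λ, dist (ψ p) (ψ q) ≤ L * (dist p q + 2 * ε)) (hL0 : 0 ≤ L)
    (hε : 0 ≤ ε) (hx : x ∈ Λ) (hx' : x' ∈ Λ) (hx'v : x' ∈ ball v (r - δ)) (hxd : xd ∈ Λ)
    (hxdd : xdd ∈ Λ) (hδ : η + ε < δ) (hclose : |dist x x' - dist xd xdd| ≤ η) :
    |dist (ψ x) (ψ x') - dist (ψ xd) (ψ xdd)| ≤ L * (δ + 3 * ε) := by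
  have hη : 0 ≤ η := (abs_nonneg _).trans hclose
  obtain ⟨hle, hge⟩ := abs_sub_le_iff.mp hclose
  rw [abs_sub_le_iff]
  constructor
  · linarith [hψ.dist_apply_le_dist_apply_add_of_le_add hnet hL hL0 hε hx hx' hx'v hxd hxdd hη hδ
      (by linarith)]
  · linarith [hψ.dist_apply_le_dist_apply_add_of_le_add' hnet hL hL0 hε hx hx' hx'v hxd hxdd hη hδ
      (by linarith)]

end NormedSpace

/-- Approximate isosceles preservation for isotonic maps on a ball: if two
pairs of points have nearly equal distances, their images under an isotonic map
have nearly equal distances, with constant proportional to `diam Q / r`. -/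
theorem stmt19 (d : ℕ) :
    ∃ K : ℝ, 0 < K ∧
      ∀ (v : EuclideanSpace ℝ (Fin d)) (r ε : ℝ)
        (Λ Q : Set (EuclideanSpace ℝ (Fin d)))
        (ψ : EuclideanSpace ℝ (Fin d) → EuclideanSpace ℝ (Fin d)),
        0 < r → 0 ≤ ε → Λ ⊆ Metric.ball v r →
        (∀ y ∈ Metric.ball v r, ∃ x ∈ Λ, dist y x ≤ ε) →
        Bornology.IsBounded Q → (∀ x ∈ Λ, ψ x ∈ Q) →
        (∀ a ∈ Λ, ∀ b ∈ Λ, ∀ a' ∈ Λ, ∀ b' ∈ Λ,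
          ‖a - b‖ < ‖a' - b'‖ → ‖ψ a - ψ b‖ ≤ ‖ψ a' - ψ b'‖) →
        ∀ x ∈ Λ ∩ Metric.ball v (3 * r / 4), ∀ x' ∈ Λ ∩ Metric.ball v (3 * r / 4),
        ∀ xd ∈ Λ, ∀ xdd ∈ Λ, ∀ η : ℝ, 0 < η → η < r / 4 - 2 * ε →
          |‖x - x'‖ - ‖xd - xdd‖| ≤ η →
          |‖ψ x - ψ x'‖ - ‖ψ xd - ψ xdd‖| ≤ K * (Metric.diam Q / r) * (η + ε) := by
  refine ⟨30 * (d + 1), by positivity, ?_⟩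
  rintro v r ε Λ Q ψ hr hε - hnet hQ hψQ hiso x ⟨hx, -⟩ x' ⟨hx', hx'v⟩ xd hxd xdd hxdd η hη hηr
    hclose
  have hψ : IsIsotonicOn ψ Λ := fun a ha b hb a' ha' b' hb' h => by
    simpa only [dist_eq_norm] using
      hiso a ha b hb a' ha' b' hb' (by simpa only [dist_eq_norm] using h)
  obtain ⟨δ, hδ, hδ'⟩ := exists_between
    (lt_min (by linarith : η + ε < 2 * (η + ε)) (by linarith : η + ε < r / 4))
  have hL0 : 0 ≤ 6 * (d + 1) * diam Q / r := by positivity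
  have key := hψ.abs_dist_sub_dist_le hnet
    (fun p hp q hq => hψ.dist_apply_le hnet hQ hψQ hr hε hp hq) hL0 hε hx hx'
    (ball_subset_ball (by linarith [min_le_right (2 * (η + ε)) (r / 4)]) hx'v) hxd hxdd hδ
    (by simpa only [dist_eq_norm] using hclose)
  simp only [dist_eq_norm] at key
  calc _ ≤ 6 * (d + 1) * diam Q / r * (δ + 3 * ε) := key
    _ ≤ 6 * (d + 1) * diam Q / r * (5 * (η + ε)) := by
        gcongr; linarith [min_le_left (2 * (η + ε)) (r / 4)]
    _ = _ := by ring
end
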